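/- arXiv:1610.02690 — 4 statements merged into one kernel-verified Lean document; each statement's English description precedes it below -/
import Mathlib

section
/- Let a_1 < b_1 < a_2 < ... < b_{n-1} < a_n be interlacing sequences and define ω(x) = ∑_{j=1}^n |x - a_j| - ∑_{j=1}^{n-1} |x - b_j|. Then ω is 1-Lipschitz, and ω(x) = |x - c| for all x outside [a_1, a_n], where c = ∑_j a_j - ∑_j b_j. -/
open Finset

/-- The function `ω(x) = ∑ |x - a j| - ∑ |x - b j|` built from
interlacing sequences is a continual diagram: it is 1-Lipschitz and equals
`|x - c|` outside `[a 0, a (n-1)]`, where `c = ∑ a - ∑ b`. -/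
theorem interlacing_continual_diagram
    (n : ℕ) (hn : 1 ≤ n) (a b : ℕ → ℝ)
    (hab : ∀ j, j < n - 1 → a j < b j)
    (hba : ∀ j, j < n - 1 → b j < a (j + 1))
    (ω : ℝ → ℝ)
    (hω : ∀ x, ω x = ∑ j ∈ range n, |x - a j| - ∑ j ∈ range (n - 1), |x - b j|) :
    LipschitzWith 1 ω ∧
    (∀ x : ℝ, x ∉ Set.Icc (a 0) (a (n - 1)) →
      ω x = |x - (∑ j ∈ range n, a j - ∑ j ∈ range (n - 1), b j)|) := by
  obtain ⟨m, rfl⟩ : ∃ m, n = m + 1 := ⟨n - 1, (Nat.succ_pred_eq_of_pos hn).symm⟩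
  simp only [Nat.add_sub_cancel] at hab hba hω ⊢
  -- monotonicity of `a`
  have step : ∀ i, i < m → a i ≤ a (i + 1) :=
    fun i hi => ((hab i hi).trans (hba i hi)).le
  have amono : ∀ j k, j ≤ k → k ≤ m → a j ≤ a k := by
    intro j k hjk hk
    induction hjk with
    | refl => exact le_rfl
    | @step k' h ih =>
        exact (ih (Nat.le_of_succ_le hk)).trans (step k' (Nat.lt_of_succ_le hk))
  -- the Lipschitz estimate
  have main : ∀ x y : ℝ, x ≤ y → |ω y - ω x| ≤ y - x := by
    intro x y hxy
    set φ : ℝ → ℝ := fun t => max x (min y t) with hφ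
    have φmono : ∀ {s t : ℝ}, s ≤ t → φ s ≤ φ t :=
      fun h => max_le_max le_rfl (min_le_min le_rfl h)
    have φlb : ∀ t, x ≤ φ t := fun t => le_max_left _ _
    have φub : ∀ t, φ t ≤ y := fun t => max_le hxy (min_le_left _ _)
    have hu : ∀ t : ℝ, |y - t| - |x - t| = x + y - 2 * φ t := by
      intro t
      rcases le_total t x with h1 | h1
      · rw [hφ]; simp only
        rw [min_eq_right (h1.trans hxy), max_eq_left h1,
          abs_of_nonneg (by linarith), abs_of_nonneg (by linarith)]
        ring
      · rcases le_total t y with h2 | h2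
        · rw [hφ]; simp only
          rw [min_eq_right h2, max_eq_right h1, abs_of_nonneg (by linarith),
            abs_of_nonpos (by linarith)]
          ring
        · rw [hφ]; simp only
          rw [min_eq_left h2, max_eq_right hxy, abs_of_nonpos (by linarith),
            abs_of_nonpos (by linarith)]
          ring
    have e1 : ω y - ω x
        = (x + y) - 2 * (φ (a m) + ∑ j ∈ range m, (φ (a j) - φ (b j))) := by
      have : ω y - ω x
          = ∑ j ∈ range (m + 1), (|y - a j| - |x - a j|)
            - ∑ j ∈ range m, (|y - b j| - |x - b j|) := by
        rw [hω, hω, Finset.sum_sub_distrib, Finset.sum_sub_distrib]; ring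
      rw [this]
      simp only [hu]
      rw [Finset.sum_range_succ]
      rw [Finset.sum_sub_distrib, Finset.sum_sub_distrib, Finset.sum_sub_distrib,
        Finset.sum_const, Finset.card_range, ← Finset.mul_sum, ← Finset.mul_sum,
        nsmul_eq_mul]
      ring
    set S := ∑ j ∈ range m, (φ (a j) - φ (b j)) with hS
    have hS_le : S ≤ 0 := by
      apply Finset.sum_nonpos
      intro j hj
      exact sub_nonpos.2 (φmono (hab j (Finset.mem_range.1 hj)).le)
    have hS_ge : φ (a 0) - φ (a m) ≤ S := by
      have htel : ∑ j ∈ range m, (φ (a j) - φ (a (j + 1)))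
          = φ (a 0) - φ (a m) := Finset.sum_range_sub' (fun j => φ (a j)) m
      rw [← htel]
      apply Finset.sum_le_sum
      intro j hj
      have := φmono (hba j (Finset.mem_range.1 hj)).le
      linarith
    have h1 : x ≤ φ (a 0) := φlb _
    have h2 : φ (a m) ≤ y := φub _
    rw [e1]
    rw [abs_le]
    constructor <;> linarith
  refine ⟨?_, ?_⟩
  · apply LipschitzWith.of_dist_le_mul
    intro p q
    rw [Real.dist_eq, Real.dist_eq, NNReal.coe_one, one_mul]
    rcases le_total p q with h | h
    · calc |ω p - ω q| = |ω q - ω p| := abs_sub_comm _ _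
        _ ≤ q - p := main p q h
        _ = |p - q| := by rw [abs_sub_comm, abs_of_nonneg (by linarith)]
    · calc |ω p - ω q| ≤ p - q := main q p h
        _ = |p - q| := (abs_of_nonneg (by linarith)).symm
  · intro x hx
    set c : ℝ := ∑ j ∈ range (m + 1), a j - ∑ j ∈ range m, b j with hc
    rw [Set.mem_Icc, not_and_or] at hx
    push_neg at hx
    rcases hx with hx | hx
    · -- x < a 0
      have hc_ge : a 0 ≤ c := by
        have : c - a 0 = ∑ j ∈ range m, (a (j + 1) - b j) := by
          rw [hc, Finset.sum_range_succ' a m, Finset.sum_sub_distrib]; ring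
        have hnn : (0:ℝ) ≤ ∑ j ∈ range m, (a (j + 1) - b j) :=
          Finset.sum_nonneg fun j hj =>
            sub_nonneg.2 (hba j (Finset.mem_range.1 hj)).le
        linarith
      have ea : ∀ j ∈ range (m + 1), |x - a j| = a j - x := by
        intro j hj
        have : a 0 ≤ a j := amono 0 j (Nat.zero_le _)
          (Nat.lt_succ_iff.1 (Finset.mem_range.1 hj))
        rw [abs_of_nonpos (by linarith)]; ring
      have eb : ∀ j ∈ range m, |x - b j| = b j - x := by
        intro j hj
        have h1 : a 0 ≤ a j := amono 0 j (Nat.zero_le _)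
          ((Finset.mem_range.1 hj).le)
        have h2 : a j < b j := hab j (Finset.mem_range.1 hj)
        rw [abs_of_nonpos (by linarith)]; ring
      rw [hω, Finset.sum_congr rfl ea, Finset.sum_congr rfl eb,
        Finset.sum_sub_distrib, Finset.sum_sub_distrib,
        Finset.sum_const, Finset.sum_const, Finset.card_range, Finset.card_range,
        abs_of_nonpos (by linarith), nsmul_eq_mul, nsmul_eq_mul]
      push_cast
      ring
    · -- a m < x
      have hc_le : c ≤ a m := by
        have : a m - c = ∑ j ∈ range m, (b j - a j) := by
          rw [hc, Finset.sum_range_succ a m, Finset.sum_sub_distrib]; ring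
        have hnn : (0:ℝ) ≤ ∑ j ∈ range m, (b j - a j) :=
          Finset.sum_nonneg fun j hj =>
            sub_nonneg.2 (hab j (Finset.mem_range.1 hj)).le
        linarith
      have ea : ∀ j ∈ range (m + 1), |x - a j| = x - a j := by
        intro j hj
        have : a j ≤ a m := amono j m
          (Nat.lt_succ_iff.1 (Finset.mem_range.1 hj)) le_rfl
        rw [abs_of_nonneg (by linarith)]
      have eb : ∀ j ∈ range m, |x - b j| = x - b j := by
        intro j hj
        have hjm := Finset.mem_range.1 hj
        have h1 : b j < a (j + 1) := hba j hjm
        have h2 : a (j + 1) ≤ a m := amono (j + 1) m hjm le_rfl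
        rw [abs_of_nonneg (by linarith)]
      rw [hω, Finset.sum_congr rfl ea, Finset.sum_congr rfl eb,
        Finset.sum_sub_distrib, Finset.sum_sub_distrib,
        Finset.sum_const, Finset.sum_const, Finset.card_range, Finset.card_range,
        abs_of_nonneg (by linarith), nsmul_eq_mul, nsmul_eq_mul]
      push_cast
      ring
end

section
/- The spectral measure of the adjacency operator T of ℤ_{>0} at the vector δ_1 is the semicircle distribution ρ_sc with density (1/2π)√(4 - x²) on [-2, 2]; equivalently, ⟨T^k δ_1, δ_1⟩ = ∫_{-2}^{2} x^k (1/2π)√(4 - x²) dx for all k ≥ 0. -/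
/-!
Both sides equal the Catalan number `C_m` for `k = 2m` and vanish for odd `k`.

Operator side: the coordinates of `T^k δ_1` obey the recursion of walks on the half-line.
Writing `w_k(n) = binom(k, (k+n)/2)` for the number of `±1`-walks of length `k` on `ℤ` from
`0` to `n`, the reflection principle solves this recursion by `w_k(n) - w_k(n+2)`, which at
`n = 0` is `binom(2m, m) - binom(2m, m+1) = C_m`.

Integral side: differentiating `x^(k+1) (r² - x²)^(3/2)` and integrating over `[-r, r]` gives
`(k+4) M_{k+2} = (k+1) r² M_k` for the moments `M_k = ∫ x^k √(r² - x²)`, which for `r = 2`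
is the recursion `(m+2) C_{m+1} = 2(2m+1) C_m` of the Catalan numbers.
-/

open Real intervalIntegral

def walkCount : ℕ → ℤ → ℕ
  | 0, n => if n = 0 then 1 else 0
  | k + 1, n => walkCount k (n - 1) + walkCount k (n + 1)

lemma walkCount_zero (n : ℤ) : walkCount 0 n = if n = 0 then 1 else 0 := rfl

lemma walkCount_succ (k : ℕ) (n : ℤ) :
    walkCount (k + 1) n = walkCount k (n - 1) + walkCount k (n + 1) := rfl

lemma walkCount_neg (k : ℕ) (n : ℤ) : walkCount k (-n) = walkCount k n := by
  induction k generalizing n with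
  | zero => simp [walkCount_zero]
  | succ k ih =>
    rw [walkCount_succ, walkCount_succ, show -n - 1 = -(n + 1) by ring,
      show -n + 1 = -(n - 1) by ring, ih, ih, add_comm]

lemma walkCount_eq_zero_of_lt_neg {k : ℕ} {n : ℤ} (h : n < -k) : walkCount k n = 0 := by
  induction k generalizing n with
  | zero => rw [walkCount_zero, if_neg (by omega)]
  | succ k ih =>
    push_cast at h
    rw [walkCount_succ, ih (by omega), ih (by omega)]

lemma walkCount_eq_zero_of_odd {k : ℕ} {n : ℤ} (h : Odd (k + n)) : walkCount k n = 0 := by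
  induction k generalizing n with
  | zero =>
    simp only [walkCount_zero, ite_eq_right_iff]
    rintro rfl
    simp at h
  | succ k ih =>
    have h₁ : Odd ((k : ℤ) + (n - 1)) := by
      have := h.sub_even (even_two (α := ℤ))
      rwa [Nat.cast_succ, show (k : ℤ) + 1 + n - 2 = k + (n - 1) by ring] at this
    have h₂ : Odd ((k : ℤ) + (n + 1)) := by
      rwa [Nat.cast_succ, add_right_comm, add_assoc] at h
    rw [walkCount_succ, ih h₁, ih h₂]

lemma walkCount_two_mul_sub (k j : ℕ) : walkCount k (2 * j - k) = k.choose j := by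
  induction k generalizing j with
  | zero => cases j <;> simp [walkCount_zero]; omega
  | succ k ih =>
    rw [walkCount_succ]
    cases j with
    | zero =>
      rw [walkCount_eq_zero_of_lt_neg (by push_cast; omega), zero_add,
        show 2 * ((0 : ℕ) : ℤ) - (k + 1 : ℕ) + 1 = 2 * ((0 : ℕ) : ℤ) - k by push_cast; ring,
        ih 0, Nat.choose_zero_right, Nat.choose_zero_right]
    | succ i =>
      push_cast
      rw [show (2 * (i + 1) - (k + 1) - 1 : ℤ) = 2 * i - k by ring,
        show (2 * (i + 1) - (k + 1) + 1 : ℤ) = 2 * ((i + 1 : ℕ) : ℤ) - k by push_cast; ring,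
        ih, ih, Nat.choose_succ_succ']

lemma catalan_add_choose_eq_centralBinom (m : ℕ) :
    catalan m + (2 * m).choose (m + 1) = m.centralBinom := by
  refine Nat.eq_of_mul_eq_mul_left (by omega : 0 < m + 1) ?_
  have h := Nat.choose_succ_right_eq (2 * m) m
  rw [show 2 * m - m = m by omega, ← Nat.centralBinom_eq_two_mul_choose] at h
  rw [mul_add, succ_mul_catalan_eq_centralBinom, mul_comm, h]
  ring

lemma add_two_mul_catalan_succ (m : ℕ) :
    (m + 2) * catalan (m + 1) = 2 * (2 * m + 1) * catalan m := by
  refine Nat.eq_of_mul_eq_mul_left (by omega : 0 < m + 1) ?_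
  calc (m + 1) * ((m + 2) * catalan (m + 1))
      = (m + 1) * ((m + 1 + 1) * catalan (m + 1)) := by ring
    _ = 2 * (2 * m + 1) * ((m + 1) * catalan m) := by
      rw [succ_mul_catalan_eq_centralBinom, succ_mul_catalan_eq_centralBinom,
        Nat.succ_mul_centralBinom_succ]
    _ = (m + 1) * (2 * (2 * m + 1) * catalan m) := by ring

/-- Reflection principle: the walks from `0` to `n` that visit `-1` are, after reflecting their
part up to the first visit, the walks from `-2` to `n`. -/
def nonnegWalkCount (k n : ℕ) : ℤ := walkCount k n - walkCount k (n + 2)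

lemma nonnegWalkCount_zero (n : ℕ) : nonnegWalkCount 0 n = if n = 0 then 1 else 0 := by
  cases n <;> simp [nonnegWalkCount, walkCount_zero]; omega

lemma nonnegWalkCount_succ (k n : ℕ) : nonnegWalkCount (k + 1) n =
    (if n = 0 then 0 else nonnegWalkCount k (n - 1)) + nonnegWalkCount k (n + 1) := by
  simp only [nonnegWalkCount, walkCount_succ]
  cases n with
  | zero =>
    rw [if_pos rfl, show ((0 : ℕ) : ℤ) - 1 = -1 by simp, walkCount_neg]
    push_cast
    ring
  | succ m =>
    rw [if_neg m.succ_ne_zero]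
    push_cast
    ring_nf

lemma nonnegWalkCount_two_mul_zero (m : ℕ) : nonnegWalkCount (2 * m) 0 = catalan m := by
  have h₀ : walkCount (2 * m) 0 = (2 * m).choose m := by
    simpa using walkCount_two_mul_sub (2 * m) m
  have h₂ : walkCount (2 * m) 2 = (2 * m).choose (m + 1) := by
    convert walkCount_two_mul_sub (2 * m) (m + 1) using 2
    push_cast
    ring
  rw [nonnegWalkCount, Nat.cast_zero, zero_add, h₀, h₂, ← Nat.centralBinom_eq_two_mul_choose,
    ← catalan_add_choose_eq_centralBinom]
  push_cast
  ring

lemma nonnegWalkCount_two_mul_add_one_zero (m : ℕ) : nonnegWalkCount (2 * m + 1) 0 = 0 := by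
  rw [nonnegWalkCount, walkCount_eq_zero_of_odd ⟨m, by push_cast; ring⟩,
    walkCount_eq_zero_of_odd ⟨m + 1, by push_cast; ring⟩]
  rfl

lemma integral_pow_mul_sqrt_sq_sub_sq_of_odd {k : ℕ} (hk : Odd k) (r : ℝ) :
    ∫ x in -r..r, x ^ k * √(r ^ 2 - x ^ 2) = 0 := by
  have h := integral_comp_neg (a := -r) (b := r) fun x ↦ x ^ k * √(r ^ 2 - x ^ 2)
  simp only [neg_neg, hk.neg_pow, even_two.neg_pow, neg_mul, intervalIntegral.integral_neg] at h
  linarith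

lemma integral_sqrt_sq_sub_sq {r : ℝ} (hr : 0 ≤ r) :
    ∫ x in -r..r, √(r ^ 2 - x ^ 2) = π * r ^ 2 / 2 := by
  rcases hr.eq_or_lt with rfl | hr
  · simp
  have h := integral_comp_mul_left (a := -1) (b := 1) (fun x ↦ √(r ^ 2 - x ^ 2)) hr.ne'
  have hscale : ∀ x : ℝ, √(r ^ 2 - (r * x) ^ 2) = r * √(1 - x ^ 2) := fun x ↦ by
    rw [show r ^ 2 - (r * x) ^ 2 = r ^ 2 * (1 - x ^ 2) by ring, sqrt_mul (sq_nonneg r),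
      sqrt_sq hr.le]
  simp only [hscale, intervalIntegral.integral_const_mul, integral_sqrt_one_sub_sq, mul_neg,
    mul_one, smul_eq_mul] at h
  field_simp at h
  linarith

lemma hasDerivAt_pow_succ_mul_rpow (r : ℝ) (k : ℕ) (x : ℝ) :
    HasDerivAt (fun x ↦ x ^ (k + 1) * (r ^ 2 - x ^ 2) ^ (3 / 2 : ℝ))
      ((k + 1) * x ^ k * (r ^ 2 - x ^ 2) ^ (3 / 2 : ℝ)
        - 3 * x ^ (k + 2) * (r ^ 2 - x ^ 2) ^ (1 / 2 : ℝ)) x := by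
  have hinner : HasDerivAt (fun x : ℝ ↦ r ^ 2 - x ^ 2) (-(2 * x)) x := by
    simpa using (hasDerivAt_pow 2 x).const_sub (r ^ 2)
  have h := (hasDerivAt_pow (k + 1) x).fun_mul (hinner.rpow_const (p := 3 / 2) (by norm_num))
  refine h.congr_deriv ?_
  rw [Nat.add_sub_cancel, show (3 / 2 : ℝ) - 1 = 1 / 2 by norm_num]
  push_cast
  ring

lemma integral_pow_add_two_mul_sqrt_sq_sub_sq (r : ℝ) (k : ℕ) :
    (k + 4) * ∫ x in -r..r, x ^ (k + 2) * √(r ^ 2 - x ^ 2) =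
      (k + 1) * r ^ 2 * ∫ x in -r..r, x ^ k * √(r ^ 2 - x ^ 2) := by
  have hint : ∀ j : ℕ,
      IntervalIntegrable (fun x ↦ x ^ j * √(r ^ 2 - x ^ 2)) MeasureTheory.volume (-r) r := fun j ↦
    (by fun_prop : Continuous fun x : ℝ ↦ x ^ j * √(r ^ 2 - x ^ 2)).intervalIntegrable _ _
  have hderiv : ∀ x ∈ Set.uIcc (-r) r,
      HasDerivAt (fun x ↦ x ^ (k + 1) * (r ^ 2 - x ^ 2) ^ (3 / 2 : ℝ))
        ((k + 1) * r ^ 2 * (x ^ k * √(r ^ 2 - x ^ 2))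
          - (k + 4) * (x ^ (k + 2) * √(r ^ 2 - x ^ 2))) x := by
    intro x hx
    have hx : 0 ≤ r ^ 2 - x ^ 2 := by
      rcases Set.mem_uIcc.1 hx with ⟨h₁, h₂⟩ | ⟨h₁, h₂⟩ <;> nlinarith
    refine (hasDerivAt_pow_succ_mul_rpow r k x).congr_deriv ?_
    rw [show (3 / 2 : ℝ) = 1 + 1 / 2 by norm_num, rpow_one_add' hx (by norm_num), ← sqrt_eq_rpow]
    ring
  have hFTC :=
    integral_eq_sub_of_hasDerivAt hderiv (((hint k).const_mul _).sub ((hint _).const_mul _))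
  rw [integral_sub ((hint k).const_mul _) ((hint _).const_mul _), integral_const_mul,
    integral_const_mul] at hFTC
  norm_num at hFTC
  linarith

lemma integral_pow_two_mul_mul_sqrt_sq_sub_sq {r : ℝ} (hr : 0 ≤ r) (m : ℕ) :
    ∫ x in -r..r, x ^ (2 * m) * √(r ^ 2 - x ^ 2) =
      π * r ^ 2 / 2 * (r / 2) ^ (2 * m) * catalan m := by
  induction m with
  | zero => simpa using integral_sqrt_sq_sub_sq hr
  | succ m ih =>
    have hrec := integral_pow_add_two_mul_sqrt_sq_sub_sq r (2 * m)
    have hcat : ((m : ℝ) + 2) * catalan (m + 1) = 2 * (2 * m + 1) * catalan m := by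
      exact_mod_cast add_two_mul_catalan_succ m
    rw [ih, show 2 * m + 2 = 2 * (m + 1) by ring] at hrec
    push_cast at hrec
    refine mul_left_cancel₀ (show (2 * m + 4 : ℝ) ≠ 0 by positivity) ?_
    linear_combination hrec - (π * r ^ 2 / 2 * (r / 2) ^ (2 * m) * r ^ 2 / 2) * hcat

lemma pow_apply_single_zero_eq_nonnegWalkCount
    (T : lp (fun _ : ℕ => ℂ) 2 →L[ℂ] lp (fun _ : ℕ => ℂ) 2)
    (hT : ∀ ψ : lp (fun _ : ℕ => ℂ) 2, ∀ n : ℕ,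
      (T ψ : ∀ _ : ℕ, ℂ) n =
        (if n = 0 then 0 else (ψ : ∀ _ : ℕ, ℂ) (n - 1)) + (ψ : ∀ _ : ℕ, ℂ) (n + 1))
    (k n : ℕ) : ((T ^ k) (lp.single 2 0 1) : ℕ → ℂ) n = nonnegWalkCount k n := by
  induction k generalizing n with
  | zero =>
    rw [pow_zero, one_apply_eq_self, nonnegWalkCount_zero]
    by_cases hn : n = 0 <;> simp [hn]
  | succ k ih =>
    rw [pow_succ', mul_apply_eq_comp, hT, ih, ih, nonnegWalkCount_succ]
    split_ifs <;> push_cast <;> ring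

/-- Coordinates are indexed by `ℕ`, the index `n` standing for the site `n + 1`, so `δ_1` is
`lp.single 2 0 1`. -/
theorem adjacency_spectral_measure_semicircle
    (T : lp (fun _ : ℕ => ℂ) 2 →L[ℂ] lp (fun _ : ℕ => ℂ) 2)
    (hT : ∀ ψ : lp (fun _ : ℕ => ℂ) 2, ∀ n : ℕ,
      (T ψ : ∀ _ : ℕ, ℂ) n =
        (if n = 0 then 0 else (ψ : ∀ _ : ℕ, ℂ) (n - 1)) + (ψ : ∀ _ : ℕ, ℂ) (n + 1)) :
    ∀ k : ℕ,
      ((T ^ k) (lp.single 2 0 1) : ∀ _ : ℕ, ℂ) 0 =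
        ((∫ x in (-2 : ℝ)..2, x ^ k * (1 / (2 * Real.pi) * Real.sqrt (4 - x ^ 2))) : ℝ) := by
  intro k
  have hρ : ∫ x in (-2 : ℝ)..2, x ^ k * (1 / (2 * π) * √(4 - x ^ 2)) =
      (2 * π)⁻¹ * ∫ x in (-2 : ℝ)..2, x ^ k * √(2 ^ 2 - x ^ 2) := by
    rw [← integral_const_mul]
    refine integral_congr fun x _ ↦ ?_
    norm_num
    ring
  rw [pow_apply_single_zero_eq_nonnegWalkCount T hT, hρ]
  obtain ⟨m, rfl | rfl⟩ := Nat.even_or_odd' k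
  · rw [nonnegWalkCount_two_mul_zero, integral_pow_two_mul_mul_sqrt_sq_sub_sq zero_le_two]
    field_simp
    norm_num
  · rw [nonnegWalkCount_two_mul_add_one_zero,
      integral_pow_mul_sqrt_sq_sub_sq_of_odd (odd_two_mul_add_one m)]
    simp
end

section
/- ∑_{λ ⊢ n} (dim λ)² = n!, where the sum is over all partitions λ of n and dim λ is the number of standard Young tableaux of shape λ. -/
/-- The number of standard Young tableaux of shape `μ`: bijective fillings of the
cells of `μ` by `0, …, |μ| - 1` which are strictly increasing along rows and
columns (equivalently, strictly monotone for the product order on cells). -/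
noncomputable def dimSYT (μ : YoungDiagram) : ℕ :=
  Nat.card {T : μ.cells → Fin μ.card //
    Function.Bijective T ∧ ∀ c d : μ.cells, (c : ℕ × ℕ) < (d : ℕ × ℕ) → T c < T d}


namespace YoungDiagram

/-- Cells `x` with `¬ c ≤ x`: removing the up-set of `c` always yields a Young diagram. -/
def eraseCell (μ : YoungDiagram) (c : ℕ × ℕ) : YoungDiagram where
  cells := μ.cells.filter (fun x => ¬ c ≤ x)
  isLowerSet := by
    intro x y hxy hy
    simp only [Finset.coe_filter, Set.mem_setOf_eq, mem_cells] at hy ⊢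
    exact ⟨μ.isLowerSet hxy hy.1, fun hc => hy.2 (hc.trans hxy)⟩

/-- Adding the down-set of `c` always yields a Young diagram. -/
def insertCell (μ : YoungDiagram) (c : ℕ × ℕ) : YoungDiagram where
  cells := μ.cells ∪ Finset.Iic c
  isLowerSet := by
    intro x y hxy hy
    simp only [Finset.coe_union, Set.mem_union, Finset.coe_Iic, Set.mem_Iic, mem_cells] at hy ⊢
    rcases hy with hy | hy
    · exact Or.inl (μ.isLowerSet hxy hy)
    · exact Or.inr (hxy.trans hy)

/-- Removable corners. -/
def remC (μ : YoungDiagram) : Finset (ℕ × ℕ) :=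
  μ.cells.filter (fun c => (c.1 + 1, c.2) ∉ μ ∧ (c.1, c.2 + 1) ∉ μ)

/-- `c` is an addable corner of `μ`. -/
def IsAdd (μ : YoungDiagram) (c : ℕ × ℕ) : Prop :=
  c ∉ μ ∧ ∀ x, x ≤ c → x ≠ c → x ∈ μ

lemma mem_remC {μ : YoungDiagram} {c : ℕ × ℕ} :
    c ∈ remC μ ↔ c ∈ μ ∧ (c.1 + 1, c.2) ∉ μ ∧ (c.1, c.2 + 1) ∉ μ := by
  simp [remC, mem_cells]

lemma not_lt_of_mem_remC {μ : YoungDiagram} {c x : ℕ × ℕ} (hc : c ∈ remC μ) (hx : x ∈ μ) :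
    ¬ c < x := by
  rw [mem_remC] at hc
  intro hlt
  have hle : c ≤ x := hlt.le
  have hne : c ≠ x := hlt.ne
  rcases lt_or_ge c.1 x.1 with h1 | h1
  · exact hc.2.1 (μ.up_left_mem h1 hle.2 hx)
  · have h2 : c.2 < x.2 := by
      rcases lt_or_eq_of_le hle.2 with h | h
      · exact h
      · exact absurd (Prod.ext (le_antisymm hle.1 h1) h) hne
    exact hc.2.2 (μ.up_left_mem hle.1 h2 hx)

lemma cells_eraseCell {μ : YoungDiagram} {c : ℕ × ℕ} (hc : c ∈ remC μ) :
    (μ.eraseCell c).cells = μ.cells.erase c := by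
  ext x
  simp only [eraseCell, Finset.mem_filter, Finset.mem_erase, mem_cells]
  constructor
  · rintro ⟨hx, h⟩
    exact ⟨fun he => h (he ▸ le_rfl), hx⟩
  · rintro ⟨hne, hx⟩
    refine ⟨hx, fun hle => ?_⟩
    exact not_lt_of_mem_remC hc hx (lt_of_le_of_ne hle (Ne.symm hne))

lemma cells_insertCell {μ : YoungDiagram} {c : ℕ × ℕ} (hc : μ.IsAdd c) :
    (μ.insertCell c).cells = insert c μ.cells := by
  ext x
  simp only [insertCell, Finset.mem_union, Finset.mem_Iic, Finset.mem_insert, mem_cells]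
  constructor
  · rintro (hx | hx)
    · exact Or.inr hx
    · by_cases he : x = c
      · exact Or.inl he
      · exact Or.inr (hc.2 x hx he)
  · rintro (rfl | hx)
    · exact Or.inr le_rfl
    · exact Or.inl hx

lemma mem_eraseCell {μ : YoungDiagram} {c x : ℕ × ℕ} (hc : c ∈ remC μ) :
    x ∈ μ.eraseCell c ↔ x ≠ c ∧ x ∈ μ := by
  rw [← mem_cells, cells_eraseCell hc, Finset.mem_erase, mem_cells]

lemma mem_insertCell {μ : YoungDiagram} {c x : ℕ × ℕ} (hc : μ.IsAdd c) :
    x ∈ μ.insertCell c ↔ x = c ∨ x ∈ μ := by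
  rw [← mem_cells, cells_insertCell hc, Finset.mem_insert, mem_cells]

lemma card_eraseCell {μ : YoungDiagram} {c : ℕ × ℕ} (hc : c ∈ remC μ) :
    (μ.eraseCell c).card = μ.card - 1 := by
  rw [YoungDiagram.card, YoungDiagram.card, cells_eraseCell hc,
    Finset.card_erase_of_mem (by rw [mem_cells]; exact (mem_remC.1 hc).1)]

lemma card_insertCell {μ : YoungDiagram} {c : ℕ × ℕ} (hc : μ.IsAdd c) :
    (μ.insertCell c).card = μ.card + 1 := by
  rw [YoungDiagram.card, YoungDiagram.card, cells_insertCell hc,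
    Finset.card_insert_of_notMem (by rw [mem_cells]; exact hc.1)]

lemma isAdd_eraseCell {μ : YoungDiagram} {c : ℕ × ℕ} (hc : c ∈ remC μ) :
    (μ.eraseCell c).IsAdd c := by
  constructor
  · rw [mem_eraseCell hc]; tauto
  · intro x hx hne
    rw [mem_eraseCell hc]
    exact ⟨hne, μ.isLowerSet hx (mem_cells _ |>.2 ((mem_remC.1 hc).1) : c ∈ μ)⟩

lemma insertCell_eraseCell {μ : YoungDiagram} {c : ℕ × ℕ} (hc : c ∈ remC μ) :
    (μ.eraseCell c).insertCell c = μ := by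
  ext x
  simp only [mem_cells]
  rw [mem_insertCell (isAdd_eraseCell hc), mem_eraseCell hc]
  constructor
  · rintro (rfl | hx)
    · exact (mem_remC.1 hc).1
    · exact hx.2
  · intro hx
    by_cases he : x = c
    · exact Or.inl he
    · exact Or.inr ⟨he, hx⟩

lemma mem_remC_insertCell {μ : YoungDiagram} {c : ℕ × ℕ} (hc : μ.IsAdd c) :
    c ∈ remC (μ.insertCell c) := by
  rw [mem_remC]
  refine ⟨(mem_insertCell hc).2 (Or.inl rfl), ?_, ?_⟩
  · rw [mem_insertCell hc]
    rintro (he | hm)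
    · exact absurd (congrArg Prod.fst he) (by simp)
    · exact hc.1 (μ.up_left_mem (by simp) (by simp) hm)
  · rw [mem_insertCell hc]
    rintro (he | hm)
    · exact absurd (congrArg Prod.snd he) (by simp)
    · exact hc.1 (μ.up_left_mem (by simp) (by simp) hm)

lemma eraseCell_insertCell {μ : YoungDiagram} {c : ℕ × ℕ} (hc : μ.IsAdd c) :
    (μ.insertCell c).eraseCell c = μ := by
  ext x
  simp only [mem_cells]
  rw [mem_eraseCell (mem_remC_insertCell hc), mem_insertCell hc]
  constructor
  · rintro ⟨hne, rfl | hx⟩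
    · exact absurd rfl hne
    · exact hx
  · intro hx
    exact ⟨fun he => hc.1 (he ▸ hx), Or.inr hx⟩

end YoungDiagram


namespace YoungDiagram

/-- Rows where a cell can be added. -/
def addRows (μ : YoungDiagram) : Finset ℕ :=
  (Finset.range (μ.colLen 0 + 1)).filter (fun i => i = 0 ∨ μ.rowLen i < μ.rowLen (i - 1))

/-- Addable corners as a finset. -/
def addC (μ : YoungDiagram) : Finset (ℕ × ℕ) :=
  (μ.addRows).image (fun i => (i, μ.rowLen i))

/-- Rows containing a removable corner. -/
def remRows (μ : YoungDiagram) : Finset ℕ :=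
  (Finset.range (μ.colLen 0)).filter (fun i => μ.rowLen (i + 1) < μ.rowLen i)

lemma rowLen_pos_iff {μ : YoungDiagram} {i : ℕ} : 0 < μ.rowLen i ↔ i < μ.colLen 0 := by
  rw [← mem_iff_lt_rowLen, mem_iff_lt_colLen]

lemma mem_addC {μ : YoungDiagram} {c : ℕ × ℕ} : c ∈ μ.addC ↔ μ.IsAdd c := by
  constructor
  · intro hc
    obtain ⟨i, hi, rfl⟩ := Finset.mem_image.1 hc
    simp only [addRows, Finset.mem_filter, Finset.mem_range] at hi
    constructor
    · simp [mem_iff_lt_rowLen]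
    · rintro ⟨a, b⟩ hab hne
      simp only [Prod.mk_le_mk] at hab
      rw [mem_iff_lt_rowLen]
      rcases lt_or_eq_of_le hab.1 with h | rfl
      · calc b ≤ μ.rowLen i := hab.2
          _ < μ.rowLen (i - 1) := by
            rcases hi.2 with h0 | h0
            · omega
            · exact h0
          _ ≤ μ.rowLen a := μ.rowLen_anti a (i - 1) (by omega)
      · rcases lt_or_eq_of_le hab.2 with h | rfl
        · exact h
        · exact absurd rfl hne
  · rintro ⟨h1, h2⟩
    obtain ⟨i, j⟩ := c
    rw [mem_iff_lt_rowLen, not_lt] at h1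
    have hj : j = μ.rowLen i := by
      rcases lt_or_eq_of_le h1 with h | h
      · exfalso
        have := h2 (i, j - 1) (Prod.le_def.2 ⟨le_rfl, by omega⟩)
          (by intro hh; have := congrArg Prod.snd hh; simp at this; omega)
        rw [mem_iff_lt_rowLen] at this
        omega
      · exact h.symm
    subst hj
    apply Finset.mem_image.2
    refine ⟨i, ?_, rfl⟩
    simp only [addRows, Finset.mem_filter, Finset.mem_range]
    rcases Nat.eq_zero_or_pos i with rfl | hi
    · refine ⟨by omega, Or.inl rfl⟩
    · have hm := h2 (i - 1, μ.rowLen i) (Prod.le_def.2 ⟨by omega, le_rfl⟩)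
        (by intro hh; have := congrArg Prod.fst hh; simp at this; omega)
      rw [mem_iff_lt_rowLen] at hm
      have hc0 : i - 1 < μ.colLen 0 := by
        rw [← rowLen_pos_iff]; omega
      exact ⟨by omega, Or.inr (by omega)⟩

lemma remC_eq_image {μ : YoungDiagram} :
    μ.remC = μ.remRows.image (fun i => (i, μ.rowLen i - 1)) := by
  ext ⟨i, j⟩
  rw [mem_remC]
  simp only [Finset.mem_image, remRows, Finset.mem_filter, Finset.mem_range,
    mem_iff_lt_rowLen, not_lt]
  constructor
  · rintro ⟨h1, h2, h3⟩
    refine ⟨i, ⟨?_, by omega⟩, by simp; omega⟩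
    rw [← rowLen_pos_iff]; omega
  · rintro ⟨a, ⟨ha, ha2⟩, he⟩
    rw [Prod.mk.injEq] at he
    obtain ⟨rfl, rfl⟩ := he
    rw [← rowLen_pos_iff] at ha
    omega

lemma card_addC {μ : YoungDiagram} : μ.addC.card = μ.remC.card + 1 := by
  have hinj : ∀ (f : ℕ → ℕ), Function.Injective (fun i => (i, f i)) := by
    intro f a b hab
    exact congrArg Prod.fst hab
  rw [addC, remC_eq_image, Finset.card_image_of_injective _ (hinj _),
    Finset.card_image_of_injective _ (hinj _)]
  have key : μ.addRows = insert 0 (μ.remRows.image (· + 1)) := by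
    ext j
    simp only [addRows, remRows, Finset.mem_insert, Finset.mem_image, Finset.mem_filter,
      Finset.mem_range]
    constructor
    · rintro ⟨hj, h0 | h0⟩
      · exact Or.inl h0
      · rcases Nat.eq_zero_or_pos j with rfl | hj0
        · exact Or.inl rfl
        · refine Or.inr ⟨j - 1, ⟨?_, ?_⟩, by omega⟩
          · rw [← rowLen_pos_iff]; omega
          · have hj1 : j - 1 + 1 = j := by omega
            rw [hj1]; exact h0
    · rintro (rfl | ⟨i, ⟨hi, hi2⟩, rfl⟩)
      · exact ⟨by omega, Or.inl rfl⟩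
      · exact ⟨by omega, Or.inr (by simpa using hi2)⟩
  rw [key, Finset.card_insert_of_notMem (by simp), Finset.card_image_of_injective _
    (fun a b h => by omega)]

/-- The key exchange lemma for pairs of corners. -/
lemma pair_swap {ν : YoungDiagram} {c c' : ℕ × ℕ} (hne : c' ≠ c) :
    (ν.IsAdd c ∧ c' ∈ (ν.insertCell c).remC) ↔ (c' ∈ ν.remC ∧ (ν.eraseCell c').IsAdd c) := by
  constructor
  · rintro ⟨hA, hR⟩
    rw [mem_remC] at hR
    have hmem := hR.1
    rw [mem_insertCell hA] at hmem
    have hc'ν : c' ∈ ν := hmem.resolve_left hne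
    have hc'R : c' ∈ ν.remC := by
      rw [mem_remC]
      refine ⟨hc'ν, fun h => hR.2.1 ((mem_insertCell hA).2 (Or.inr h)),
        fun h => hR.2.2 ((mem_insertCell hA).2 (Or.inr h))⟩
    refine ⟨hc'R, ?_, ?_⟩
    · rw [mem_eraseCell hc'R]
      rintro ⟨-, hcν⟩
      exact hA.1 hcν
    · intro x hx hxc
      rw [mem_eraseCell hc'R]
      refine ⟨?_, hA.2 x hx hxc⟩
      intro hxeq
      rw [hxeq] at hx hxc
      -- c' ≤ c, c' ≠ c: contradiction with c' removable in ν+c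
      have h1 : c'.1 < c.1 ∨ c'.2 < c.2 := by
        by_contra h
        push_neg at h
        exact hxc (Prod.ext (le_antisymm hx.1 h.1) (le_antisymm hx.2 h.2))
      have hcmem : c ∈ ν.insertCell c := (mem_insertCell hA).2 (Or.inl rfl)
      rcases h1 with h | h
      · exact hR.2.1 ((ν.insertCell c).up_left_mem (by omega) hx.2 hcmem)
      · exact hR.2.2 ((ν.insertCell c).up_left_mem hx.1 (by omega) hcmem)
  · rintro ⟨hc'R, hA'⟩
    have hAν : ν.IsAdd c := by
      constructor
      · intro hc
        exact hA'.1 ((mem_eraseCell hc'R).2 ⟨fun h => hne h.symm, hc⟩)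
      · intro x hx hxc
        exact ((mem_eraseCell hc'R).1 (hA'.2 x hx hxc)).2
    refine ⟨hAν, ?_⟩
    rw [mem_remC]
    have hc'ν : c' ∈ ν := (mem_remC.1 hc'R).1
    refine ⟨(mem_insertCell hAν).2 (Or.inr hc'ν), ?_, ?_⟩
    · rw [mem_insertCell hAν]
      rintro (he | hm)
      · -- c = (c'.1+1, c'.2): then c' ≤ c, c' ≠ c, so IsAdd (ν−c') c gives c' ∈ ν−c', absurd
        have := hA'.2 c' (by rw [← he]; exact Prod.le_def.2 ⟨by omega, le_rfl⟩) hne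
        rw [mem_eraseCell hc'R] at this
        exact this.1 rfl
      · exact (mem_remC.1 hc'R).2.1 hm
    · rw [mem_insertCell hAν]
      rintro (he | hm)
      · have := hA'.2 c' (by rw [← he]; exact Prod.le_def.2 ⟨le_rfl, by omega⟩) hne
        rw [mem_eraseCell hc'R] at this
        exact this.1 rfl
      · exact (mem_remC.1 hc'R).2.2 hm

lemma insertCell_eraseCell_comm {ν : YoungDiagram} {c c' : ℕ × ℕ} (hne : c' ≠ c)
    (hA : ν.IsAdd c) (hR : c' ∈ (ν.insertCell c).remC) :
    (ν.insertCell c).eraseCell c' = (ν.eraseCell c').insertCell c := by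
  obtain ⟨hc'R, hA'⟩ := (pair_swap hne).1 ⟨hA, hR⟩
  ext x
  simp only [mem_cells]
  rw [mem_eraseCell hR, mem_insertCell hA, mem_insertCell hA', mem_eraseCell hc'R]
  constructor
  · rintro ⟨hxc', rfl | hx⟩
    · exact Or.inl rfl
    · exact Or.inr ⟨hxc', hx⟩
  · rintro (rfl | ⟨hxc', hx⟩)
    · exact ⟨Ne.symm hne, Or.inl rfl⟩
    · exact ⟨hxc', Or.inr hx⟩

lemma card_eq_zero_iff {μ : YoungDiagram} : μ.card = 0 ↔ μ = ⊥ := by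
  rw [YoungDiagram.card, Finset.card_eq_zero]
  constructor
  · intro h
    ext x
    simp [h]
  · rintro rfl
    rfl

lemma remC_nonempty {μ : YoungDiagram} (h : μ ≠ ⊥) : μ.remC.Nonempty := by
  have hcol : 0 < μ.colLen 0 := by
    by_contra hc
    push_neg at hc
    apply h
    rw [← card_eq_zero_iff, YoungDiagram.card, Finset.card_eq_zero]
    ext ⟨i, j⟩
    simp only [Finset.notMem_empty, iff_false, mem_cells, mem_iff_lt_colLen]
    have := μ.colLen_anti 0 j (by omega)
    omega
  rw [remC_eq_image]
  apply Finset.Nonempty.image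
  refine ⟨μ.colLen 0 - 1, ?_⟩
  simp only [remRows, Finset.mem_filter, Finset.mem_range]
  refine ⟨by omega, ?_⟩
  have h1 : 0 < μ.rowLen (μ.colLen 0 - 1) := rowLen_pos_iff.2 (by omega)
  have h2 : μ.rowLen (μ.colLen 0 - 1 + 1) = 0 := by
    by_contra hc
    have h3 := rowLen_pos_iff.1 (Nat.pos_of_ne_zero hc)
    omega
  omega

end YoungDiagram
namespace YoungDiagram

/-- The type of standard Young tableaux of shape `μ`. -/
def SYTT (μ : YoungDiagram) : Type :=
  {T : μ.cells → Fin μ.card //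
    Function.Bijective T ∧ ∀ c d : μ.cells, (c : ℕ × ℕ) < (d : ℕ × ℕ) → T c < T d}

instance (μ : YoungDiagram) : Finite (SYTT μ) := by
  unfold SYTT; infer_instance

variable {lam : YoungDiagram}

/-- The cell carrying the largest entry. -/
noncomputable def topCell (h : 0 < lam.card) (T : SYTT lam) : lam.cells :=
  Function.surjInv T.2.1.2 ⟨lam.card - 1, by omega⟩

lemma topCell_spec (h : 0 < lam.card) (T : SYTT lam) :
    T.1 (topCell h T) = ⟨lam.card - 1, by omega⟩ :=
  Function.surjInv_eq T.2.1.2 _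

lemma topCell_eq (h : 0 < lam.card) (T : SYTT lam) {x : lam.cells}
    (hx : (T.1 x).1 = lam.card - 1) : topCell h T = x :=
  T.2.1.1 (by rw [topCell_spec h T]; exact (Fin.ext hx).symm)

lemma topCell_mem_remC (h : 0 < lam.card) (T : SYTT lam) :
    (topCell h T : ℕ × ℕ) ∈ lam.remC := by
  set c := topCell h T with hc
  have hmax : ∀ x : lam.cells, ¬ ((c : ℕ × ℕ) < (x : ℕ × ℕ)) := by
    intro x hx
    have h1 := T.2.2 c x hx
    rw [topCell_spec h T] at h1
    have h2 := (T.1 x).isLt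
    have h3 : lam.card - 1 < (T.1 x).1 := h1
    omega
  rw [mem_remC]
  refine ⟨(mem_cells _).1 c.2, fun hm => ?_, fun hm => ?_⟩
  · refine hmax ⟨((c : ℕ × ℕ).1 + 1, (c : ℕ × ℕ).2), (mem_cells _).2 hm⟩ ?_
    exact Prod.lt_iff.2 (Or.inl ⟨Nat.lt_succ_self _, le_rfl⟩)
  · refine hmax ⟨((c : ℕ × ℕ).1, (c : ℕ × ℕ).2 + 1), (mem_cells _).2 hm⟩ ?_
    exact Prod.lt_iff.2 (Or.inr ⟨le_rfl, Nat.lt_succ_self _⟩)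

lemma mem_cells_of_eraseCell {c : ℕ × ℕ} (hc : c ∈ lam.remC) {x : ℕ × ℕ}
    (hx : x ∈ (lam.eraseCell c).cells) : x ∈ lam.cells := by
  rw [cells_eraseCell hc] at hx
  exact Finset.mem_of_mem_erase hx

lemma ne_of_mem_eraseCell {c : ℕ × ℕ} (hc : c ∈ lam.remC) {x : ℕ × ℕ}
    (hx : x ∈ (lam.eraseCell c).cells) : x ≠ c := by
  rw [cells_eraseCell hc] at hx
  exact Finset.ne_of_mem_erase hx

lemma mem_eraseCell_cells {c : ℕ × ℕ} (hc : c ∈ lam.remC) {x : ℕ × ℕ}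
    (hx : x ∈ lam.cells) (hne : x ≠ c) : x ∈ (lam.eraseCell c).cells := by
  rw [cells_eraseCell hc]
  exact Finset.mem_erase.2 ⟨hne, hx⟩

lemma val_lt_of_ne_top (h : 0 < lam.card) (T : SYTT lam) {x : lam.cells}
    (hx : x ≠ topCell h T) : (T.1 x).1 < lam.card - 1 := by
  have h1 := (T.1 x).isLt
  have h2 : (T.1 x).1 ≠ lam.card - 1 := fun hv => hx (topCell_eq h T hv).symm
  omega

/-- Restriction of a SYT to the diagram minus its top cell. -/
noncomputable def resTab (h : 0 < lam.card) (T : SYTT lam) :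
    SYTT (lam.eraseCell (topCell h T)) := by
  have hcR : ((topCell h T : ℕ × ℕ)) ∈ lam.remC := topCell_mem_remC h T
  have hcard : (lam.eraseCell (topCell h T : ℕ × ℕ)).card = lam.card - 1 := card_eraseCell hcR
  refine ⟨fun x => ⟨(T.1 ⟨x, mem_cells_of_eraseCell hcR x.2⟩).1, by
      rw [hcard]
      exact val_lt_of_ne_top h T
        (fun he => ne_of_mem_eraseCell hcR x.2 (congrArg Subtype.val he))⟩, ?_, ?_⟩
  · rw [Fintype.bijective_iff_injective_and_card]
    constructor
    · intro x y hxy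
      simp only [Fin.mk.injEq] at hxy
      have h2 : T.1 ⟨x, mem_cells_of_eraseCell hcR x.2⟩ =
          T.1 ⟨y, mem_cells_of_eraseCell hcR y.2⟩ := Fin.ext hxy
      have h3 := T.2.1.1 h2
      exact Subtype.ext (Subtype.mk_eq_mk.1 h3)
    · simp [Fintype.card_coe]
  · intro x y hxy
    exact T.2.2 _ _ hxy

/-- The branching map. -/
noncomputable def resMap (h : 0 < lam.card) (T : SYTT lam) :
    Σ c : {c // c ∈ lam.remC}, SYTT (lam.eraseCell c.1) :=
  ⟨⟨(topCell h T : ℕ × ℕ), topCell_mem_remC h T⟩, resTab h T⟩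

/-- Evaluation of a branch datum at a cell; used to avoid `HEq` reasoning. -/
noncomputable def valAt (p : Σ c : {c // c ∈ lam.remC}, SYTT (lam.eraseCell c.1))
    (y : ℕ × ℕ) : ℕ :=
  if hy : y ∈ (lam.eraseCell p.1.1).cells then (p.2.1 ⟨y, hy⟩).1 else 0

lemma resMap_injective (h : 0 < lam.card) : Function.Injective (resMap h) := by
  intro T₁ T₂ hT
  have hfst : ((topCell h T₁ : ℕ × ℕ)) = (topCell h T₂ : ℕ × ℕ) :=
    congrArg (fun p => p.1.1) hT
  have hval : ∀ y, valAt (resMap h T₁) y = valAt (resMap h T₂) y :=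
    fun y => congrArg (fun p => valAt p y) hT
  apply Subtype.ext
  funext x
  by_cases hx : x = topCell h T₁
  · apply Fin.ext
    have hv1 : (T₁.1 x).1 = lam.card - 1 := by
      rw [hx]; exact congrArg Fin.val (topCell_spec h T₁)
    have h5 : topCell h T₂ = x := Subtype.ext (by rw [hx]; exact hfst.symm)
    have hv2 : (T₂.1 x).1 = lam.card - 1 := by
      rw [← h5]; exact congrArg Fin.val (topCell_spec h T₂)
    rw [hv1, hv2]
  · have hxne : (x : ℕ × ℕ) ≠ ((topCell h T₁ : ℕ × ℕ)) :=
      fun he => hx (Subtype.ext he)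
    have hmem : (x : ℕ × ℕ) ∈ (lam.eraseCell (topCell h T₁ : ℕ × ℕ)).cells :=
      mem_eraseCell_cells (topCell_mem_remC h T₁) x.2 hxne
    have hmem2 : (x : ℕ × ℕ) ∈ (lam.eraseCell (topCell h T₂ : ℕ × ℕ)).cells := by
      rw [← hfst]; exact hmem
    have h1 := hval x
    unfold valAt resMap at h1
    rw [dif_pos hmem, dif_pos hmem2] at h1
    apply Fin.ext
    have e1 : ((resTab h T₁).1 ⟨x, hmem⟩).1 = (T₁.1 x).1 := rfl
    have e2 : ((resTab h T₂).1 ⟨x, hmem2⟩).1 = (T₂.1 x).1 := rfl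
    rw [e1, e2] at h1
    exact h1

/-- The extension map: add the top entry at a removable corner. -/
noncomputable def extTab (h : 0 < lam.card) (c : ℕ × ℕ) (hc : c ∈ lam.remC)
    (S : SYTT (lam.eraseCell c)) : SYTT lam := by
  have hcard : (lam.eraseCell c).card = lam.card - 1 := card_eraseCell hc
  refine ⟨fun x => if hx : (x : ℕ × ℕ) = c then ⟨lam.card - 1, by omega⟩
    else ⟨(S.1 ⟨x, mem_eraseCell_cells hc x.2 hx⟩).1, by
      have h1 := (S.1 ⟨x, mem_eraseCell_cells hc x.2 hx⟩).isLt
      omega⟩, ?_, ?_⟩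
  · rw [Fintype.bijective_iff_injective_and_card]
    constructor
    · intro x y hxy
      simp only at hxy
      by_cases hx : (x : ℕ × ℕ) = c <;> by_cases hy : (y : ℕ × ℕ) = c
      · exact Subtype.ext (hx.trans hy.symm)
      · rw [dif_pos hx, dif_neg hy] at hxy
        have hv : lam.card - 1 = (S.1 ⟨y, mem_eraseCell_cells hc y.2 hy⟩).1 :=
          congrArg Fin.val hxy
        have h1 := (S.1 ⟨y, mem_eraseCell_cells hc y.2 hy⟩).isLt
        omega
      · rw [dif_neg hx, dif_pos hy] at hxy
        have hv : (S.1 ⟨x, mem_eraseCell_cells hc x.2 hx⟩).1 = lam.card - 1 :=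
          congrArg Fin.val hxy
        have h1 := (S.1 ⟨x, mem_eraseCell_cells hc x.2 hx⟩).isLt
        omega
      · rw [dif_neg hx, dif_neg hy] at hxy
        simp only [Fin.mk.injEq] at hxy
        have h2 : S.1 ⟨x, mem_eraseCell_cells hc x.2 hx⟩ =
            S.1 ⟨y, mem_eraseCell_cells hc y.2 hy⟩ := Fin.ext hxy
        have h3 := S.2.1.1 h2
        exact Subtype.ext (Subtype.mk_eq_mk.1 h3)
    · simp [Fintype.card_coe]
  · intro x y hxy
    by_cases hy : (y : ℕ × ℕ) = c
    · have hx : (x : ℕ × ℕ) ≠ c := fun he => absurd hxy (by rw [he, hy]; exact lt_irrefl _)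
      simp only [dif_pos hy, dif_neg hx]
      have h1 := (S.1 ⟨x, mem_eraseCell_cells hc x.2 hx⟩).isLt
      exact Fin.mk_lt_mk.2 (by omega)
    · by_cases hx : (x : ℕ × ℕ) = c
      · exfalso
        exact not_lt_of_mem_remC hc ((mem_cells _).1 y.2) (hx ▸ hxy)
      · simp only [dif_neg hx, dif_neg hy]
        exact Fin.mk_lt_mk.2 (S.2.2 ⟨x, _⟩ ⟨y, _⟩ hxy)

lemma extTab_apply_self (h : 0 < lam.card) (c : ℕ × ℕ) (hc : c ∈ lam.remC)
    (S : SYTT (lam.eraseCell c)) (x : lam.cells) (hx : (x : ℕ × ℕ) = c) :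
    ((extTab h c hc S).1 x).1 = lam.card - 1 := by
  show (if hx : (x : ℕ × ℕ) = c then (⟨lam.card - 1, by omega⟩ : Fin lam.card) else _).1 = _
  rw [dif_pos hx]

lemma extTab_apply_ne (h : 0 < lam.card) (c : ℕ × ℕ) (hc : c ∈ lam.remC)
    (S : SYTT (lam.eraseCell c)) (x : lam.cells) (hx : (x : ℕ × ℕ) ≠ c) :
    ((extTab h c hc S).1 x).1 = (S.1 ⟨x, mem_eraseCell_cells hc x.2 hx⟩).1 := by
  show (dite _ _ _ : Fin lam.card).1 = _
  rw [dif_neg hx]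

/-- The extension map on branch data. -/
noncomputable def extMap (h : 0 < lam.card)
    (p : Σ c : {c // c ∈ lam.remC}, SYTT (lam.eraseCell c.1)) : SYTT lam :=
  extTab h p.1.1 p.1.2 p.2

lemma extMap_injective (h : 0 < lam.card) : Function.Injective (extMap (lam := lam) h) := by
  rintro ⟨⟨c₁, hc₁⟩, S₁⟩ ⟨⟨c₂, hc₂⟩, S₂⟩ hE
  have hE' : extTab h c₁ hc₁ S₁ = extTab h c₂ hc₂ S₂ := hE
  have hcc : c₁ = c₂ := by
    by_contra hne
    have hmemc₁ : c₁ ∈ lam.cells := by rw [mem_cells]; exact (mem_remC.1 hc₁).1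
    have e1 : ((extTab h c₁ hc₁ S₁).1 ⟨c₁, hmemc₁⟩).1 = lam.card - 1 :=
      extTab_apply_self h c₁ hc₁ S₁ _ rfl
    have e2 : ((extTab h c₂ hc₂ S₂).1 ⟨c₁, hmemc₁⟩).1 =
        (S₂.1 ⟨c₁, mem_eraseCell_cells hc₂ hmemc₁ hne⟩).1 :=
      extTab_apply_ne h c₂ hc₂ S₂ _ hne
    have hcard : (lam.eraseCell c₂).card = lam.card - 1 := card_eraseCell hc₂
    have h1 : (S₂.1 ⟨c₁, mem_eraseCell_cells hc₂ hmemc₁ hne⟩).1 < (lam.eraseCell c₂).card :=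
      (S₂.1 ⟨c₁, mem_eraseCell_cells hc₂ hmemc₁ hne⟩).isLt
    rw [hE'] at e1
    omega
  subst hcc
  have hSS : S₁ = S₂ := by
    apply Subtype.ext
    funext x
    have hxne : (x : ℕ × ℕ) ≠ c₁ := ne_of_mem_eraseCell hc₁ x.2
    have hxm : (x : ℕ × ℕ) ∈ lam.cells := mem_cells_of_eraseCell hc₁ x.2
    have e1 : ((extTab h c₁ hc₁ S₁).1 ⟨x, hxm⟩).1 =
        (S₁.1 ⟨x, mem_eraseCell_cells hc₁ hxm hxne⟩).1 := extTab_apply_ne h c₁ hc₁ S₁ _ hxne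
    have e2 : ((extTab h c₁ hc₂ S₂).1 ⟨x, hxm⟩).1 =
        (S₂.1 ⟨x, mem_eraseCell_cells hc₁ hxm hxne⟩).1 := extTab_apply_ne h c₁ hc₂ S₂ _ hxne
    rw [hE'] at e1
    apply Fin.ext
    have hxx : (⟨x, mem_eraseCell_cells hc₁ hxm hxne⟩ : (lam.eraseCell c₁).cells) = x :=
      Subtype.ext rfl
    rw [hxx] at e1 e2
    rw [← e1, ← e2]
  subst hSS
  rfl

end YoungDiagram
namespace YoungDiagram

lemma dimSYT_eq (μ : YoungDiagram) : dimSYT μ = Nat.card (SYTT μ) := rfl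

lemma bot_cells_elim (x : ((⊥ : YoungDiagram).cells : Finset (ℕ × ℕ))) : False := by
  exact notMem_bot _ ((mem_cells _).1 x.2)

lemma dimSYT_bot : dimSYT ⊥ = 1 := by
  rw [dimSYT_eq]
  rw [Nat.card_eq_one_iff_unique]
  constructor
  · constructor
    intro T₁ T₂
    apply Subtype.ext
    funext x
    exact (bot_cells_elim x).elim
  · have hcard : (⊥ : YoungDiagram).card = 0 := card_eq_zero_iff.2 rfl
    refine ⟨⟨fun x => (bot_cells_elim x).elim, ⟨?_, ?_⟩, ?_⟩⟩
    · intro x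
      exact (bot_cells_elim x).elim
    · intro v
      have := v.isLt
      omega
    · intro x
      exact (bot_cells_elim x).elim

/-- The branching rule. -/
lemma dim_branch {lam : YoungDiagram} (h : 0 < lam.card) :
    dimSYT lam = ∑ c ∈ lam.remC, dimSYT (lam.eraseCell c) := by
  classical
  have h1 : Nat.card (SYTT lam) =
      Nat.card (Σ c : {c // c ∈ lam.remC}, SYTT (lam.eraseCell c.1)) :=
    le_antisymm (Nat.card_le_card_of_injective _ (resMap_injective h))
      (Nat.card_le_card_of_injective _ (extMap_injective h))
  rw [dimSYT_eq, h1]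
  letI : ∀ c : {c // c ∈ lam.remC}, Fintype (SYTT (lam.eraseCell c.1)) :=
    fun c => Fintype.ofFinite _
  rw [Nat.card_eq_fintype_card, Fintype.card_sigma]
  rw [← Finset.sum_coe_sort lam.remC (fun c => dimSYT (lam.eraseCell c))]
  congr 1
  funext c
  rw [dimSYT_eq, Nat.card_eq_fintype_card]

/-- The key identity: `∑_{λ ⋗ ν} dim λ = (|ν| + 1) dim ν`. -/
lemma sum_addC : ∀ (k : ℕ) (ν : YoungDiagram), ν.card = k →
    ∑ c ∈ ν.addC, dimSYT (ν.insertCell c) = (k + 1) * dimSYT ν := by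
  intro k
  induction k using Nat.strong_induction_on with
  | _ k IH =>
    intro ν hk
    classical
    -- Step 1: expand each dim (ν + c) by the branching rule
    have step1 : ∀ c ∈ ν.addC, dimSYT (ν.insertCell c) =
        dimSYT ν + ∑ c' ∈ (ν.insertCell c).remC.erase c,
          dimSYT ((ν.insertCell c).eraseCell c') := by
      intro c hc
      have hA : ν.IsAdd c := mem_addC.1 hc
      have hcR : c ∈ (ν.insertCell c).remC := mem_remC_insertCell hA
      rw [dim_branch (by rw [card_insertCell hA]; omega)]
      rw [← Finset.add_sum_erase _ _ hcR, eraseCell_insertCell hA]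
    rw [Finset.sum_congr rfl step1, Finset.sum_add_distrib, Finset.sum_const, smul_eq_mul]
    -- The double sum P
    set P : ℕ := ∑ c ∈ ν.addC, ∑ c' ∈ (ν.insertCell c).remC.erase c,
      dimSYT ((ν.insertCell c).eraseCell c') with hP
    -- Step 2: swap the double sum
    have step2 : P = ∑ c' ∈ ν.remC, ∑ c ∈ (ν.eraseCell c').addC.erase c',
        dimSYT ((ν.eraseCell c').insertCell c) := by
      rw [hP, Finset.sum_sigma' ν.addC _ (fun c c' => dimSYT ((ν.insertCell c).eraseCell c')),
        Finset.sum_sigma' ν.remC _ (fun c' c => dimSYT ((ν.eraseCell c').insertCell c))]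
      refine Finset.sum_nbij' (fun p => ⟨p.2, p.1⟩) (fun q => ⟨q.2, q.1⟩) ?_ ?_ ?_ ?_ ?_
      · rintro ⟨c, c'⟩ hp
        simp only [Finset.mem_sigma, Finset.mem_erase] at hp ⊢
        obtain ⟨hc, hc'ne, hc'⟩ := hp
        have hA : ν.IsAdd c := mem_addC.1 hc
        obtain ⟨hR, hA'⟩ := (pair_swap hc'ne).1 ⟨hA, hc'⟩
        have hcne : c ≠ c' := fun he => hc'ne he.symm
        exact ⟨hR, hcne, mem_addC.2 hA'⟩
      · rintro ⟨c', c⟩ hq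
        simp only [Finset.mem_sigma, Finset.mem_erase] at hq ⊢
        obtain ⟨hc', hcne, hc⟩ := hq
        have hA' : (ν.eraseCell c').IsAdd c := mem_addC.1 hc
        have hc'ne : c' ≠ c := fun he => hcne he.symm
        obtain ⟨hA, hR⟩ := (pair_swap hc'ne).2 ⟨hc', hA'⟩
        exact ⟨mem_addC.2 hA, hc'ne, hR⟩
      · rintro ⟨c, c'⟩ _; rfl
      · rintro ⟨c', c⟩ _; rfl
      · rintro ⟨c, c'⟩ hp
        simp only [Finset.mem_sigma, Finset.mem_erase] at hp
        obtain ⟨hc, hc'ne, hc'⟩ := hp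
        have hA : ν.IsAdd c := mem_addC.1 hc
        simp only
        rw [insertCell_eraseCell_comm hc'ne hA hc']
    -- Step 3: evaluate the inner sums using the induction hypothesis
    have step3 : P + ν.remC.card * dimSYT ν = k * dimSYT ν := by
      rcases eq_or_ne ν ⊥ with rfl | hbot
      · have hR : (⊥ : YoungDiagram).remC = ∅ := by
          simp [remC, cells_bot]
        have hk0 : k = 0 := by rw [← hk]; rfl
        rw [step2, hR, hk0]
        simp
      · have hkpos : 0 < k := by
          rw [← hk]
          by_contra ho
          exact hbot (card_eq_zero_iff.1 (by omega))
        have inner : ∀ c' ∈ ν.remC, (∑ c ∈ (ν.eraseCell c').addC.erase c',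
            dimSYT ((ν.eraseCell c').insertCell c)) + dimSYT ν = k * dimSYT (ν.eraseCell c') := by
          intro c' hc'
          have hA' : (ν.eraseCell c').IsAdd c' := isAdd_eraseCell hc'
          have hmem : c' ∈ (ν.eraseCell c').addC := mem_addC.2 hA'
          have hcard' : (ν.eraseCell c').card = k - 1 := by rw [card_eraseCell hc', hk]
          have hIH := IH (k - 1) (by omega) (ν.eraseCell c') hcard'
          have hk1 : k - 1 + 1 = k := by omega
          rw [hk1] at hIH
          rw [← hIH, ← Finset.add_sum_erase _ _ hmem, insertCell_eraseCell hc']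
          omega
        calc P + ν.remC.card * dimSYT ν
            = ∑ c' ∈ ν.remC, ((∑ c ∈ (ν.eraseCell c').addC.erase c',
                dimSYT ((ν.eraseCell c').insertCell c)) + dimSYT ν) := by
              rw [step2, Finset.sum_add_distrib, Finset.sum_const, smul_eq_mul]
          _ = ∑ c' ∈ ν.remC, k * dimSYT (ν.eraseCell c') := Finset.sum_congr rfl inner
          _ = k * ∑ c' ∈ ν.remC, dimSYT (ν.eraseCell c') := by rw [Finset.mul_sum]
          _ = k * dimSYT ν := by rw [← dim_branch (by omega : 0 < ν.card)]
    have step4 : ν.addC.card = ν.remC.card + 1 := card_addC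
    -- Conclude
    rw [step4]
    have e : (ν.remC.card + 1) * dimSYT ν + P =
        (P + ν.remC.card * dimSYT ν) + dimSYT ν := by ring
    rw [e, step3]
    ring

end YoungDiagram
namespace YoungDiagram

lemma cells_subset_range {l : YoungDiagram} :
    l.cells ⊆ Finset.range l.card ×ˢ Finset.range l.card := by
  rintro ⟨i, j⟩ hm
  rw [Finset.mem_product, Finset.mem_range, Finset.mem_range]
  constructor
  · have hsub : Finset.range (i + 1) ×ˢ {j} ⊆ l.cells := by
      rintro ⟨a, b⟩ hab
      rw [Finset.mem_product, Finset.mem_range, Finset.mem_singleton] at hab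
      obtain ⟨ha, rfl⟩ := hab
      exact (mem_cells _).2 (l.up_left_mem (by omega) le_rfl ((mem_cells _).1 hm))
    have := Finset.card_le_card hsub
    simpa using this
  · have hsub : {i} ×ˢ Finset.range (j + 1) ⊆ l.cells := by
      rintro ⟨a, b⟩ hab
      rw [Finset.mem_product, Finset.mem_range, Finset.mem_singleton] at hab
      obtain ⟨rfl, hb⟩ := hab
      exact (mem_cells _).2 (l.up_left_mem le_rfl (by omega) ((mem_cells _).1 hm))
    have := Finset.card_le_card hsub
    simpa using this

lemma cells_subset_range' {l : YoungDiagram} {n : ℕ} (h : l.card = n) :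
    l.cells ⊆ Finset.range n ×ˢ Finset.range n := by
  subst h
  exact cells_subset_range

instance levelFinite (n : ℕ) : Finite {l : YoungDiagram // l.card = n} := by
  apply Finite.of_injective (fun l : {l : YoungDiagram // l.card = n} =>
    (⟨l.1.cells, Finset.mem_powerset.2 (cells_subset_range' l.2)⟩ :
      {s // s ∈ (Finset.range n ×ˢ Finset.range n).powerset}))
  intro l₁ l₂ h
  have hc : l₁.1.cells = l₂.1.cells := congrArg Subtype.val h
  apply Subtype.ext
  ext x
  rw [hc]

lemma mainAux (n : ℕ) :
    ∑ᶠ l : {l : YoungDiagram // l.card = n}, dimSYT l.1 ^ 2 = n.factorial := by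
  induction n with
  | zero =>
    letI : Fintype {l : YoungDiagram // l.card = 0} := Fintype.ofFinite _
    rw [finsum_eq_sum_of_fintype]
    have hbot : (⊥ : YoungDiagram).card = 0 := card_eq_zero_iff.2 rfl
    rw [Fintype.sum_eq_single (⟨⊥, hbot⟩ : {l : YoungDiagram // l.card = 0})]
    · rw [dimSYT_bot]
      rfl
    · intro b hb
      exact absurd (Subtype.ext (card_eq_zero_iff.1 b.2)) hb
  | succ n IH =>
    classical
    letI I0 : Fintype {l : YoungDiagram // l.card = n} := Fintype.ofFinite _
    letI I1 : Fintype {l : YoungDiagram // l.card = n + 1} := Fintype.ofFinite _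
    rw [finsum_eq_sum_of_fintype] at IH ⊢
    set s0 : Finset YoungDiagram :=
      Finset.univ.map (Function.Embedding.subtype (fun l : YoungDiagram => l.card = n))
      with hs0
    set s1 : Finset YoungDiagram :=
      Finset.univ.map (Function.Embedding.subtype (fun l : YoungDiagram => l.card = n + 1))
      with hs1
    have hmem0 : ∀ {μ : YoungDiagram}, μ ∈ s0 ↔ μ.card = n := by
      intro μ
      rw [hs0, Finset.mem_map]
      constructor
      · rintro ⟨l, -, rfl⟩
        exact l.2
      · intro hμ
        exact ⟨⟨μ, hμ⟩, Finset.mem_univ _, rfl⟩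
    have hmem1 : ∀ {μ : YoungDiagram}, μ ∈ s1 ↔ μ.card = n + 1 := by
      intro μ
      rw [hs1, Finset.mem_map]
      constructor
      · rintro ⟨l, -, rfl⟩
        exact l.2
      · intro hμ
        exact ⟨⟨μ, hμ⟩, Finset.mem_univ _, rfl⟩
    have hIH' : ∑ μ ∈ s0, dimSYT μ ^ 2 = n.factorial := by
      rw [hs0, Finset.sum_map]
      exact IH
    have hgoal : ∑ l : {l : YoungDiagram // l.card = n + 1}, dimSYT l.1 ^ 2 =
        ∑ μ ∈ s1, dimSYT μ ^ 2 := by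
      rw [hs1, Finset.sum_map]
      rfl
    rw [hgoal]
    calc ∑ μ ∈ s1, dimSYT μ ^ 2
        = ∑ μ ∈ s1, ∑ c' ∈ μ.remC, dimSYT μ * dimSYT (μ.eraseCell c') := by
          refine Finset.sum_congr rfl (fun μ hμ => ?_)
          rw [← Finset.mul_sum, ← dim_branch (by rw [hmem1.1 hμ]; omega), sq]
      _ = ∑ p ∈ s1.sigma (fun μ => μ.remC), dimSYT p.1 * dimSYT (p.1.eraseCell p.2) := by
          rw [Finset.sum_sigma' s1 _ (fun μ c' => dimSYT μ * dimSYT (μ.eraseCell c'))]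
      _ = ∑ q ∈ s0.sigma (fun ν => ν.addC), dimSYT (q.1.insertCell q.2) * dimSYT q.1 := by
          refine Finset.sum_nbij' (fun p => ⟨p.1.eraseCell p.2, p.2⟩)
            (fun q => ⟨q.1.insertCell q.2, q.2⟩) ?_ ?_ ?_ ?_ ?_
          · rintro ⟨μ, c⟩ hp
            rw [Finset.mem_sigma] at hp ⊢
            obtain ⟨h1, h2⟩ := hp
            refine ⟨hmem0.2 ?_, mem_addC.2 (isAdd_eraseCell h2)⟩
            rw [card_eraseCell h2, hmem1.1 h1]
            omega
          · rintro ⟨ν, c⟩ hq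
            rw [Finset.mem_sigma] at hq ⊢
            obtain ⟨h1, h2⟩ := hq
            have hA := mem_addC.1 h2
            refine ⟨hmem1.2 ?_, mem_remC_insertCell hA⟩
            rw [card_insertCell hA, hmem0.1 h1]
          · rintro ⟨μ, c⟩ hp
            rw [Finset.mem_sigma] at hp
            exact Sigma.ext (insertCell_eraseCell hp.2) (HEq.rfl)
          · rintro ⟨ν, c⟩ hq
            rw [Finset.mem_sigma] at hq
            exact Sigma.ext (eraseCell_insertCell (mem_addC.1 hq.2)) (HEq.rfl)
          · rintro ⟨μ, c⟩ hp
            rw [Finset.mem_sigma] at hp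
            simp only
            rw [insertCell_eraseCell hp.2]
      _ = ∑ ν ∈ s0, ∑ c ∈ ν.addC, dimSYT (ν.insertCell c) * dimSYT ν := by
          rw [Finset.sum_sigma' s0 _ (fun ν c => dimSYT (ν.insertCell c) * dimSYT ν)]
      _ = ∑ ν ∈ s0, (n + 1) * dimSYT ν ^ 2 := by
          refine Finset.sum_congr rfl (fun ν hν => ?_)
          rw [← Finset.sum_mul, sum_addC ν.card ν rfl, hmem0.1 hν, sq]
          ring
      _ = (n + 1).factorial := by
          rw [← Finset.mul_sum, hIH', Nat.factorial_succ]

end YoungDiagram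


/-- The Robinson–Schensted identity:
`∑_{λ ⊢ n} (dim λ)² = n!`, the sum being over all Young diagrams with `n` boxes. -/
theorem sum_sq_dimSYT (n : ℕ) [Fintype {l : YoungDiagram // l.card = n}] :
    ∑ l : {l : YoungDiagram // l.card = n}, (dimSYT l.1) ^ 2 = n.factorial := by
  rw [← finsum_eq_sum_of_fintype]
  exact YoungDiagram.mainAux n
end

section
/- In the group algebra ℂ[S_n], let X_m = (1 m) + (2 m) + ... + (m-1, m) be the Jucys–Murphy element. With P_{l,m}(x) as the non-backtracking Chebyshev-type polynomial P_{l,m}(x) = (m-1)^{l/2} U_l(x/(2√(m-1))) - (m-1)^{(l-2)/2} U_{l-2}(x/(2√(m-1))), one has P_{l,m-1}(X_m) = ∑_{p ∈ P_{l,m}} (j_1 m)(j_2 m)···(j_l m), where the sum runs over tuples p = (j_1,...,j_l) ∈ {1,...,m-1}^l with j_r ≠ j_{r+1} for all 1 ≤ r ≤ l-1. -/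
open Polynomial

/-- Chebyshev polynomials of the second kind with the convention
`U_{-1} = U_{-2} = ⋯ = 0`. -/
noncomputable def chebyshevU' (R : Type*) [CommRing R] (k : ℤ) : R[X] :=
  if k < 0 then 0 else Polynomial.Chebyshev.U R k

/-- The non-backtracking Chebyshev-type polynomial
`P_{l,m}(x) = (m-1)^{l/2} U_l(x/(2√(m-1))) - (m-1)^{(l-2)/2} U_{l-2}(x/(2√(m-1)))`
(with `U_{-2} = U_{-1} = 0`). -/
noncomputable def nbPoly (l m : ℕ) : ℂ[X] :=
  C ((Real.sqrt ((m : ℝ) - 1) : ℂ) ^ l) *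
      (chebyshevU' ℂ l).comp (C (1 / (2 * (Real.sqrt ((m : ℝ) - 1) : ℂ))) * X) -
    C ((Real.sqrt ((m : ℝ) - 1) : ℂ) ^ (l - 2)) *
      (chebyshevU' ℂ ((l : ℤ) - 2)).comp (C (1 / (2 * (Real.sqrt ((m : ℝ) - 1) : ℂ))) * X)

/-!
Write `A = ∑_{j ∈ S} a_j` for involutions `a_j` in a ring (here `a_j = (j m)` and `|S| = m`),
and let `N_L` be the sum of the words `a_{j_1} ⋯ a_{j_L}` over non-backtracking tuples in `S`.
Multiplying a word on the left by `a_j` either extends it to a longer non-backtracking word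
(`j ≠ j_1`) or, as `a_{j_1}² = 1`, deletes its first letter; a word of length `L ≥ 1` arises in
the second way from `|S| - 1` words. Hence `A N_1 = N_2 + |S|` and
`A N_{L+2} = N_{L+3} + (|S| - 1) N_{L+1}`. With `s = √(|S| - 1)`, the polynomials
`V_k = s^k U_k(x / 2s)` satisfy `V_{k+2} = x V_{k+1} - s² V_k`, so `P_l = V_l - V_{l-2}` obeys the
same recursion as `N_l`, with the same initial values `1, x`.
-/

open Finset

section ScaledChebyshev

variable {K : Type*} [Field K] (s : K)

noncomputable def scaledChebyshevU (k : ℤ) : K[X] :=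
  C (s ^ k) * (chebyshevU' K k).comp (C (1 / (2 * s)) * X)

theorem scaledChebyshevU_of_neg {k : ℤ} (hk : k < 0) : scaledChebyshevU s k = 0 := by
  simp [scaledChebyshevU, chebyshevU', hk]

theorem scaledChebyshevU_zero : scaledChebyshevU s 0 = 1 := by
  simp [scaledChebyshevU, chebyshevU']

variable [NeZero (2 : K)] {s} (hs : s ≠ 0)
include hs

theorem scaledChebyshevU_one : scaledChebyshevU s 1 = X := by
  have h : C s * C s⁻¹ * (2 * C 2⁻¹) = (1 : K[X]) := by
    rw [← map_ofNat C 2, ← C_mul, ← C_mul, ← C_mul, mul_inv_cancel₀ hs,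
      mul_inv_cancel₀ two_ne_zero, mul_one, C_1]
  simp [scaledChebyshevU, chebyshevU']
  linear_combination X * h

theorem scaledChebyshevU_add_two {k : ℤ} (hk : -1 ≤ k) :
    scaledChebyshevU s (k + 2) =
      X * scaledChebyshevU s (k + 1) - C (s ^ 2) * scaledChebyshevU s k := by
  obtain rfl | hk := hk.eq_or_lt
  · norm_num [scaledChebyshevU_one hs, scaledChebyshevU_zero, scaledChebyshevU_of_neg]
  have h1 : C (s ^ (k + 2)) * (2 * C (1 / (2 * s))) = C (s ^ (k + 1)) := by
    rw [← map_ofNat C 2, ← C_mul, ← C_mul]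
    congr 1
    rw [zpow_add₀ hs, zpow_add₀ hs]
    field_simp
  have h2 : C (s ^ (k + 2)) = C (s ^ 2) * C (s ^ k) := by
    rw [← C_mul, zpow_add₀ hs, mul_comm, zpow_two, pow_two]
  simp only [scaledChebyshevU, chebyshevU', if_neg (show ¬ k + 2 < 0 by omega),
    if_neg (show ¬ k + 1 < 0 by omega), if_neg (show ¬ k < 0 by omega), Chebyshev.U_add_two,
    sub_comp, mul_comp, X_comp, ofNat_comp]
  linear_combination (X * (Chebyshev.U K (k + 1)).comp (C (1 / (2 * s)) * X)) * h1 -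
    ((Chebyshev.U K k).comp (C (1 / (2 * s)) * X)) * h2

end ScaledChebyshev

theorem nbPoly_eq_scaledChebyshevU_sub (l m : ℕ) :
    nbPoly l m = scaledChebyshevU (Real.sqrt ((m : ℝ) - 1) : ℂ) l -
      scaledChebyshevU (Real.sqrt ((m : ℝ) - 1) : ℂ) ((l : ℤ) - 2) := by
  rw [nbPoly, scaledChebyshevU, scaledChebyshevU, zpow_natCast]
  -- For `l < 2` the exponent `l - 2 : ℕ` is truncated, which is harmless as `U_{l-2} = 0`.
  rcases lt_or_ge l 2 with hl | hl
  · have hU : chebyshevU' ℂ ((l : ℤ) - 2) = 0 := if_pos (by omega)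
    rw [hU, zero_comp, mul_zero, mul_zero]
  · rw [show (l : ℤ) - 2 = ((l - 2 : ℕ) : ℤ) by omega, zpow_natCast]

theorem nbPoly_zero (m : ℕ) : nbPoly 0 m = 1 := by
  rw [nbPoly_eq_scaledChebyshevU_sub, Nat.cast_zero, scaledChebyshevU_zero,
    scaledChebyshevU_of_neg _ (by norm_num), sub_zero]

theorem ofReal_sqrt_sub_one_sq {m : ℕ} (hm : 1 ≤ m) :
    (Real.sqrt ((m : ℝ) - 1) : ℂ) ^ 2 = m - 1 := by
  have : (1 : ℝ) ≤ m := by exact_mod_cast hm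
  rw [← Complex.ofReal_pow, Real.sq_sqrt (by linarith)]
  push_cast
  ring

section

variable {m : ℕ} (hm : 1 < m)
include hm

theorem ofReal_sqrt_sub_one_ne_zero : (Real.sqrt ((m : ℝ) - 1) : ℂ) ≠ 0 := by
  have : (1 : ℝ) < m := by exact_mod_cast hm
  exact Complex.ofReal_ne_zero.mpr (Real.sqrt_ne_zero'.mpr (by linarith))

theorem nbPoly_one : nbPoly 1 m = X := by
  rw [nbPoly_eq_scaledChebyshevU_sub, Nat.cast_one,
    scaledChebyshevU_one (ofReal_sqrt_sub_one_ne_zero hm),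
    scaledChebyshevU_of_neg _ (by norm_num), sub_zero]

theorem nbPoly_two : nbPoly 2 m = X * X - C (m : ℂ) := by
  have hs := ofReal_sqrt_sub_one_ne_zero hm
  have h := scaledChebyshevU_add_two hs (k := 0) (by norm_num)
  rw [zero_add, zero_add, scaledChebyshevU_one hs, scaledChebyshevU_zero,
    ofReal_sqrt_sub_one_sq hm.le] at h
  rw [nbPoly_eq_scaledChebyshevU_sub, Nat.cast_ofNat, sub_self, h, scaledChebyshevU_zero, map_sub,
    map_one]
  ring

theorem nbPoly_add_three (l : ℕ) :
    nbPoly (l + 3) m = X * nbPoly (l + 2) m - C ((m : ℂ) - 1) * nbPoly (l + 1) m := by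
  have hrec (k : ℤ) (hk : -1 ≤ k) : scaledChebyshevU (Real.sqrt ((m : ℝ) - 1) : ℂ) (k + 2) =
      X * scaledChebyshevU (Real.sqrt ((m : ℝ) - 1) : ℂ) (k + 1) -
        C ((m : ℂ) - 1) * scaledChebyshevU (Real.sqrt ((m : ℝ) - 1) : ℂ) k := by
    rw [scaledChebyshevU_add_two (ofReal_sqrt_sub_one_ne_zero hm) hk, ofReal_sqrt_sub_one_sq hm.le]
  have h1 := hrec (l + 1) (by omega)
  have h2 := hrec (l - 1) (by omega)
  simp only [nbPoly_eq_scaledChebyshevU_sub]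
  push_cast
  ring_nf at h1 h2 ⊢
  linear_combination h1 - h2

end

section NonBacktracking

variable {α : Type*} [DecidableEq α] (S : Finset α)

def nbPaths (L : ℕ) : Finset (Fin L → α) :=
  (Fintype.piFinset fun _ => S).filter fun p => ∀ r t : Fin L, (t : ℕ) + 1 = r → p r ≠ p t

variable {S}

theorem mem_nbPaths {L : ℕ} {p : Fin L → α} :
    p ∈ nbPaths S L ↔
      (∀ r, p r ∈ S) ∧ ∀ r t : Fin L, (t : ℕ) + 1 = r → p r ≠ p t := by
  simp [nbPaths]

theorem cons_mem_nbPaths_succ_iff {L : ℕ} {j : α} {q : Fin (L + 1) → α} :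
    Fin.cons j q ∈ nbPaths S (L + 2) ↔ q ∈ nbPaths S (L + 1) ∧ j ∈ S.erase (q 0) := by
  simp only [mem_nbPaths, Fin.forall_fin_succ, Fin.cons_zero, Fin.cons_succ, mem_erase]
  grind

theorem nbPaths_zero : nbPaths S 0 = {Fin.elim0} := by
  ext p
  simp [mem_nbPaths, Subsingleton.elim p Fin.elim0]

variable {M : Type*} [AddCommMonoid M]

theorem sum_nbPaths_one (f : (Fin 1 → α) → M) :
    ∑ p ∈ nbPaths S 1, f p = ∑ j ∈ S, f fun _ => j := by
  have const_eval_zero (p : Fin 1 → α) : (fun _ => p 0) = p :=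
    funext fun i => congrArg p (Subsingleton.elim 0 i)
  refine sum_nbij' (· 0) (fun j _ => j) (fun p hp => ?_) (fun j hj => ?_)
    (fun p _ => const_eval_zero p) (fun _ _ => rfl) (fun p _ => by rw [const_eval_zero])
  · exact (mem_nbPaths.mp hp).1 0
  · simpa [mem_nbPaths] using hj

theorem sum_nbPaths_succ_succ {L : ℕ} (f : (Fin (L + 2) → α) → M) :
    ∑ p ∈ nbPaths S (L + 2), f p =
      ∑ q ∈ nbPaths S (L + 1), ∑ j ∈ S.erase (q 0), f (Fin.cons j q) := by
  rw [sum_sigma']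
  refine sum_nbij' (fun p => ⟨Fin.tail p, p 0⟩) (fun x => Fin.cons x.2 x.1) (fun p hp => ?_)
    (fun x hx => ?_) (fun p _ => Fin.cons_self_tail p) (fun x _ => ?_) (fun p _ => ?_)
  · rw [← Fin.cons_self_tail p, cons_mem_nbPaths_succ_iff] at hp
    exact mem_sigma.mpr hp
  · exact cons_mem_nbPaths_succ_iff.mpr (mem_sigma.mp hx)
  · simp
  · rw [Fin.cons_self_tail]

end NonBacktracking

section PathProd

variable {α G : Type*} [Monoid G] (a : α → G)

def pathProd {L : ℕ} (p : Fin L → α) : G :=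
  (List.ofFn fun r => a (p r)).prod

theorem pathProd_cons {L : ℕ} (j : α) (q : Fin L → α) :
    pathProd a (Fin.cons j q) = a j * pathProd a q := by
  simp [pathProd, List.ofFn_succ]

theorem pathProd_eq_mul_pathProd_tail {L : ℕ} (q : Fin (L + 1) → α) :
    pathProd a q = a (q 0) * pathProd a (Fin.tail q) := by
  rw [← pathProd_cons, Fin.cons_self_tail]

end PathProd

section PathSums

variable {α A : Type*} [DecidableEq α] [Ring A] (a : α → A)

def nbPathSum (S : Finset α) (L : ℕ) : A :=
  ∑ p ∈ nbPaths S L, pathProd a p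

variable (S : Finset α)

theorem nbPathSum_zero : nbPathSum a S 0 = 1 := by
  simp [nbPathSum, nbPaths_zero, pathProd]

theorem nbPathSum_one : nbPathSum a S 1 = ∑ j ∈ S, a j := by
  simp [nbPathSum, sum_nbPaths_one, pathProd]

variable {a S} (ha : ∀ j ∈ S, a j * a j = 1)
include ha

theorem sum_mul_nbPathSum_succ (L : ℕ) :
    (∑ j ∈ S, a j) * nbPathSum a S (L + 1) =
      nbPathSum a S (L + 2) + ∑ q ∈ nbPaths S (L + 1), pathProd a (Fin.tail q) := by
  have backtrack (q : Fin (L + 1) → α) (hq : q ∈ nbPaths S (L + 1)) :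
      a (q 0) * pathProd a q = pathProd a (Fin.tail q) := by
    rw [pathProd_eq_mul_pathProd_tail, ← mul_assoc, ha _ ((mem_nbPaths.mp hq).1 0), one_mul]
  calc (∑ j ∈ S, a j) * nbPathSum a S (L + 1)
      = ∑ q ∈ nbPaths S (L + 1),
          (∑ j ∈ S.erase (q 0), a j * pathProd a q + a (q 0) * pathProd a q) := by
        rw [nbPathSum, mul_sum]
        refine sum_congr rfl fun q hq => ?_
        rw [sum_erase_add _ _ ((mem_nbPaths.mp hq).1 0), sum_mul]
    _ = nbPathSum a S (L + 2) + ∑ q ∈ nbPaths S (L + 1), pathProd a (Fin.tail q) := by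
        simp only [sum_add_distrib, nbPathSum, sum_nbPaths_succ_succ, pathProd_cons]
        exact congrArg _ (sum_congr rfl backtrack)

theorem sum_mul_self_eq_nbPathSum_two :
    (∑ j ∈ S, a j) * (∑ j ∈ S, a j) = nbPathSum a S 2 + #S := by
  nth_rw 2 [← nbPathSum_one a S]
  rw [sum_mul_nbPathSum_succ ha, sum_nbPaths_one]
  simp [pathProd]

theorem sum_mul_nbPathSum_add_two (L : ℕ) :
    (∑ j ∈ S, a j) * nbPathSum a S (L + 2) =
      nbPathSum a S (L + 3) + (#S - 1) * nbPathSum a S (L + 1) := by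
  rw [sum_mul_nbPathSum_succ ha, sum_nbPaths_succ_succ, nbPathSum, nbPathSum, mul_sum]
  refine congrArg _ (sum_congr rfl fun q hq => ?_)
  have hq0 : q 0 ∈ S := (mem_nbPaths.mp hq).1 0
  simp [card_erase_of_mem hq0, Nat.cast_pred (card_pos.mpr ⟨_, hq0⟩)]

end PathSums

theorem aeval_nbPoly_sum_eq_nbPathSum {α A : Type*} [DecidableEq α] [Ring A] [Algebra ℂ A]
    {a : α → A} {S : Finset α} (hS : 1 < #S) (ha : ∀ j ∈ S, a j * a j = 1) :
    ∀ l, aeval (∑ j ∈ S, a j) (nbPoly l #S) = nbPathSum a S l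
  | 0 => by rw [nbPoly_zero, map_one, nbPathSum_zero]
  | 1 => by rw [nbPoly_one hS, aeval_X, nbPathSum_one]
  | 2 => by
    rw [nbPoly_two hS, map_sub, map_mul, aeval_X, aeval_C, map_natCast,
      sum_mul_self_eq_nbPathSum_two ha, add_sub_cancel_right]
  | l + 3 => by
    rw [nbPoly_add_three hS, map_sub, map_mul, map_mul, aeval_X, aeval_C,
      aeval_nbPoly_sum_eq_nbPathSum hS ha (l + 2), aeval_nbPoly_sum_eq_nbPathSum hS ha (l + 1),
      sum_mul_nbPathSum_add_two ha, map_sub, map_natCast, map_one, add_sub_cancel_right]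

open Classical in
/-- In `ℂ[S_n]`, with `X_m` the Jucys–Murphy element (the sum
of the transpositions `(j m)` over the elements `j` preceding `m`; elements of
`S_n` are zero-based here, so `m` stands for the one-based index `m + 1`), one
has `P_{l,m-1}(X_m) = ∑_p (j_1 m)(j_2 m)⋯(j_l m)`, the sum running over tuples
`(j_1, …, j_l)` of elements preceding `m` with `j_r ≠ j_{r+1}` for all `r`. -/
theorem nbPoly_jucysMurphy_eq_sum_paths
    (n : ℕ) (m : Fin n) (hm : 2 ≤ (m : ℕ)) (l : ℕ)
    (Xm : MonoidAlgebra ℂ (Equiv.Perm (Fin n)))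
    (hXm : Xm = ∑ j ∈ Finset.univ.filter (fun j : Fin n => j < m),
      MonoidAlgebra.of ℂ (Equiv.Perm (Fin n)) (Equiv.swap j m)) :
    Polynomial.aeval Xm (nbPoly l (m : ℕ)) =
      ∑ p ∈ Finset.univ.filter (fun p : Fin l → Fin n =>
          (∀ r, p r < m) ∧
          (∀ r t : Fin l, (t : ℕ) + 1 = (r : ℕ) → p r ≠ p t)),
        MonoidAlgebra.of ℂ (Equiv.Perm (Fin n))
          ((List.ofFn (fun r : Fin l => Equiv.swap (p r) m)).prod) := by
  have hS : #(univ.filter fun j : Fin n => j < m) = m := by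
    rw [filter_gt_eq_Iio, Fin.card_Iio]
  set S := univ.filter fun j : Fin n => j < m
  have hpaths : univ.filter (fun p : Fin l → Fin n =>
      (∀ r, p r < m) ∧ ∀ r t : Fin l, (t : ℕ) + 1 = r → p r ≠ p t) = nbPaths S l := by
    ext p
    simp [mem_nbPaths, S]
  rw [hpaths, hXm, ← hS, aeval_nbPoly_sum_eq_nbPathSum (hS ▸ hm)
    fun j _ => by rw [← map_mul, Equiv.swap_mul_self, map_one]]
  exact sum_congr rfl fun p _ => by rw [pathProd, map_list_prod, List.map_ofFn]; rfl
end
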